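/- Let f be a bi-univalent function of the class K_σ(φ), i.e. f is bi-univalent with inverse extension F and both 1 + zf''(z)/f'(z) ≺ φ(z) and 1 + wF''(w)/F'(w) ≺ φ(w). Then the second Taylor coefficient of f satisfies |a₂| ≤ min{ √((B₁² + B₁ + |B₂ − B₁|)/6), B₁/2 }. -/

import Mathlib

/-!
Write `p = f''(0) = 2 a₂`. If `1 + z f''/f' = φ ∘ ω` with a Schwarz function `ω`, comparing
derivatives at `0` gives `p = B₁ ω'(0)` and `2 (f'''(0) - p²) = 2 B₂ ω'(0)² + B₁ ω''(0)`.
Differentiating `F ∘ f = id` gives `F''(0) = -p` and `F'''(0) = 3 p² - f'''(0)`, so the same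
relations for `F` and its Schwarz function `W` read `-p = B₁ W'(0)` and
`2 (2 p² - f'''(0)) = 2 B₂ W'(0)² + B₁ W''(0)`. Adding the second-order relations eliminates
`f'''(0)`; with `W'(0) = -ω'(0)` this gives `(2 B₁² - 4 B₂) p² = B₁³ (ω''(0) + W''(0))`.
The Schwarz–Pick bound `|ω''(0)| ≤ 2 (1 - |ω'(0)|²)` turns this into
`|p|² (|B₁² - 2 B₂| + 2 B₁) ≤ 2 B₁³`, and an elementary inequality bounds the resulting
estimate for `|a₂|²` by `(B₁² + B₁ + |B₂ - B₁|) / 6`. The bound `B₁ / 2` is `|ω'(0)| ≤ 1`.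
-/

open Metric Set Complex

noncomputable section

/-- `g` is subordinate to `h` on the unit disk: there is an analytic `ω : 𝔻 → 𝔻`
with `ω 0 = 0` such that `g = h ∘ ω` on `𝔻`. -/
def Subordinate (g h : ℂ → ℂ) : Prop :=
  ∃ ω : ℂ → ℂ, DifferentiableOn ℂ ω (ball 0 1) ∧ ω 0 = 0 ∧
    (∀ z ∈ ball (0 : ℂ) 1, ω z ∈ ball (0 : ℂ) 1) ∧
    ∀ z ∈ ball (0 : ℂ) 1, g z = h (ω z)

open Filter
open scoped Topology ComplexConjugate

section Calculus

variable {𝕜 : Type*} [NontriviallyNormedField 𝕜]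

theorem deriv_id_mul_zero {u : 𝕜 → 𝕜} (hu : DifferentiableAt 𝕜 u 0) :
    deriv (fun x => x * u x) 0 = u 0 := by
  simp [deriv_fun_mul differentiableAt_fun_id hu]

variable [CompleteSpace 𝕜]

theorem deriv_deriv_id_mul_zero {u : 𝕜 → 𝕜} (hu : AnalyticAt 𝕜 u 0) :
    deriv (deriv fun x => x * u x) 0 = 2 * deriv u 0 := by
  have h : deriv (fun x => x * u x) =ᶠ[𝓝 0] fun x => u x + x * deriv u x := by
    filter_upwards [hu.eventually_analyticAt] with x hx
    simp [deriv_fun_mul differentiableAt_fun_id hx.differentiableAt]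
  rw [h.deriv_eq, deriv_fun_add hu.differentiableAt
    (differentiableAt_fun_id.fun_mul hu.deriv.differentiableAt),
    deriv_fun_mul differentiableAt_fun_id hu.deriv.differentiableAt]
  simp only [deriv_id'', zero_mul, add_zero, one_mul]
  ring

theorem deriv_deriv_comp {φ ω : 𝕜 → 𝕜} {z : 𝕜} (hφ : AnalyticAt 𝕜 φ (ω z))
    (hω : AnalyticAt 𝕜 ω z) :
    deriv (deriv (φ ∘ ω)) z =
      deriv (deriv φ) (ω z) * deriv ω z ^ 2 + deriv φ (ω z) * deriv (deriv ω) z := by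
  have hchain : deriv (φ ∘ ω) =ᶠ[𝓝 z] fun x => deriv φ (ω x) * deriv ω x := by
    filter_upwards [hω.continuousAt.eventually hφ.eventually_analyticAt,
      hω.eventually_analyticAt] with x hφx hωx
    exact deriv_comp x hφx.differentiableAt hωx.differentiableAt
  have hφ' : DifferentiableAt 𝕜 (fun x => deriv φ (ω x)) z :=
    hφ.deriv.differentiableAt.comp z hω.differentiableAt
  have hφ'_deriv : deriv (fun x => deriv φ (ω x)) z = deriv (deriv φ) (ω z) * deriv ω z :=
    deriv_comp z hφ.deriv.differentiableAt hω.differentiableAt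
  rw [hchain.deriv_eq, deriv_fun_mul hφ' hω.deriv.differentiableAt, hφ'_deriv]
  ring

theorem deriv_deriv_deriv_comp {φ ω : 𝕜 → 𝕜} {z : 𝕜} (hφ : AnalyticAt 𝕜 φ (ω z))
    (hω : AnalyticAt 𝕜 ω z) :
    deriv (deriv (deriv (φ ∘ ω))) z =
      deriv (deriv (deriv φ)) (ω z) * deriv ω z ^ 3
        + 3 * deriv (deriv φ) (ω z) * deriv ω z * deriv (deriv ω) z
        + deriv φ (ω z) * deriv (deriv (deriv ω)) z := by
  have hchain : deriv (deriv (φ ∘ ω)) =ᶠ[𝓝 z] fun x =>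
      deriv (deriv φ) (ω x) * deriv ω x ^ 2 + deriv φ (ω x) * deriv (deriv ω) x := by
    filter_upwards [hω.continuousAt.eventually hφ.eventually_analyticAt,
      hω.eventually_analyticAt] with x hφx hωx
    exact deriv_deriv_comp hφx hωx
  have hφ' : DifferentiableAt 𝕜 (fun x => deriv φ (ω x)) z :=
    hφ.deriv.differentiableAt.comp z hω.differentiableAt
  have hφ'' : DifferentiableAt 𝕜 (fun x => deriv (deriv φ) (ω x)) z :=
    hφ.deriv.deriv.differentiableAt.comp z hω.differentiableAt
  have hφ'_deriv : deriv (fun x => deriv φ (ω x)) z = deriv (deriv φ) (ω z) * deriv ω z :=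
    deriv_comp z hφ.deriv.differentiableAt hω.differentiableAt
  have hφ''_deriv : deriv (fun x => deriv (deriv φ) (ω x)) z =
      deriv (deriv (deriv φ)) (ω z) * deriv ω z :=
    deriv_comp z hφ.deriv.deriv.differentiableAt hω.differentiableAt
  have hω' := hω.deriv.differentiableAt
  have hω'' := hω.deriv.deriv.differentiableAt
  rw [hchain.deriv_eq, deriv_fun_add (hφ''.fun_mul (hω'.fun_pow 2)) (hφ'.fun_mul hω''),
    deriv_fun_mul hφ'' (hω'.fun_pow 2), deriv_fun_mul hφ' hω'', deriv_fun_pow hω',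
    hφ'_deriv, hφ''_deriv]
  ring

theorem derivs_of_comp_eventuallyEq_id {f F : 𝕜 → 𝕜} {z : 𝕜} (hF : AnalyticAt 𝕜 F (f z))
    (hf : AnalyticAt 𝕜 f z) (hf1 : deriv f z = 1) (hFf : F ∘ f =ᶠ[𝓝 z] id) :
    deriv F (f z) = 1 ∧ deriv (deriv F) (f z) = -deriv (deriv f) z ∧
      deriv (deriv (deriv F)) (f z) = 3 * deriv (deriv f) z ^ 2 - deriv (deriv (deriv f)) z := by
  have h1 : deriv (F ∘ f) =ᶠ[𝓝 z] fun _ => 1 := by rw [← deriv_id']; exact hFf.deriv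
  have h2 : deriv (deriv (F ∘ f)) =ᶠ[𝓝 z] fun _ => 0 := by rw [← deriv_const']; exact h1.deriv
  have d1 : deriv F (f z) * deriv f z = 1 := by
    rw [← deriv_comp z hF.differentiableAt hf.differentiableAt]; exact h1.self_of_nhds
  have d2 := h2.self_of_nhds
  have d3 : deriv (deriv (deriv (F ∘ f))) z = 0 := by rw [h2.deriv_eq, deriv_const]
  rw [deriv_deriv_comp hF hf] at d2
  rw [deriv_deriv_deriv_comp hF hf] at d3
  rw [hf1, mul_one] at d1
  rw [hf1, d1] at d2 d3
  refine ⟨d1, by linear_combination d2, by linear_combination d3 - 3 * deriv (deriv f) z * d2⟩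

theorem derivs_one_add_mul_deriv_deriv_div_deriv {f : 𝕜 → 𝕜} (hf : AnalyticAt 𝕜 f 0)
    (hf1 : deriv f 0 = 1) :
    deriv (fun z => 1 + z * deriv (deriv f) z / deriv f z) 0 = deriv (deriv f) 0 ∧
      deriv (deriv fun z => 1 + z * deriv (deriv f) z / deriv f z) 0 =
        2 * (deriv (deriv (deriv f)) 0 - deriv (deriv f) 0 ^ 2) := by
  set u := fun z => deriv (deriv f) z / deriv f z
  have hua : AnalyticAt 𝕜 u 0 := hf.deriv.deriv.div hf.deriv (by rw [hf1]; exact one_ne_zero)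
  have hg : (fun z => 1 + z * deriv (deriv f) z / deriv f z) = fun z => 1 + z * u z :=
    funext fun z => by rw [mul_div_assoc]
  rw [hg, deriv_const_add', deriv_id_mul_zero hua.differentiableAt,
    deriv_deriv_id_mul_zero hua, deriv_fun_div hf.deriv.deriv.differentiableAt
      hf.deriv.differentiableAt (by rw [hf1]; exact one_ne_zero)]
  simp only [u, hf1]
  constructor <;> ring

end Calculus

theorem sq_norm_sub_add_mul_eq_sq_norm_one_sub_conj_mul (a w : ℂ) :
    ‖w - a‖ ^ 2 + (1 - ‖a‖ ^ 2) * (1 - ‖w‖ ^ 2) = ‖1 - conj a * w‖ ^ 2 := by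
  rw [← Complex.ofReal_inj]
  push_cast
  simp only [← Complex.mul_conj', map_sub, map_mul, map_one, Complex.conj_conj]
  ring

theorem norm_sub_div_one_sub_conj_mul_lt_one {a w : ℂ} (ha : ‖a‖ < 1) (hw : ‖w‖ < 1) :
    ‖(w - a) / (1 - conj a * w)‖ < 1 := by
  have hpos : 0 < (1 - ‖a‖ ^ 2) * (1 - ‖w‖ ^ 2) := by
    apply mul_pos <;> nlinarith [norm_nonneg a, norm_nonneg w]
  have hsq := sq_norm_sub_add_mul_eq_sq_norm_one_sub_conj_mul a w
  have hden : 0 < ‖1 - conj a * w‖ := by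
    by_contra h
    nlinarith [norm_nonneg (1 - conj a * w), sq_nonneg ‖w - a‖]
  rw [norm_div, div_lt_one hden]
  nlinarith [norm_nonneg (w - a)]

theorem norm_deriv_le_one_sub_sq_of_mapsTo_ball {ψ : ℂ → ℂ}
    (hd : DifferentiableOn ℂ ψ (ball 0 1)) (hψ : MapsTo ψ (ball 0 1) (ball 0 1)) :
    ‖deriv ψ 0‖ ≤ 1 - ‖ψ 0‖ ^ 2 := by
  set a := ψ 0
  have ha : ‖a‖ < 1 := mem_ball_zero_iff.mp (hψ (mem_ball_self one_pos))
  have hden : ∀ w ∈ ball (0 : ℂ) 1, 1 - conj a * w ≠ 0 := by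
    intro w hw h
    have : ‖conj a * w‖ < 1 := by
      rw [norm_mul, Complex.norm_conj]
      nlinarith [norm_nonneg a, norm_nonneg w, mem_ball_zero_iff.mp hw]
    rw [← sub_eq_zero.mp h, norm_one] at this
    exact lt_irrefl 1 this
  set m : ℂ → ℂ := fun w => (w - a) / (1 - conj a * w)
  have hm_maps : MapsTo m (ball 0 1) (ball 0 1) := fun w hw => mem_ball_zero_iff.mpr
    (norm_sub_div_one_sub_conj_mul_lt_one ha (mem_ball_zero_iff.mp hw))
  have hm_diff : DifferentiableOn ℂ m (ball 0 1) :=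
    (differentiableOn_id.sub_const a).div
      ((differentiableOn_const 1).sub (differentiableOn_id.const_mul _)) hden
  have hma : 1 - conj a * a = ((1 - ‖a‖ ^ 2 : ℝ) : ℂ) := by
    rw [Complex.conj_mul']; push_cast; ring
  have ha' : (0 : ℝ) < 1 - ‖a‖ ^ 2 := by nlinarith [norm_nonneg a]
  have hm_deriv : HasDerivAt m ((1 - ‖a‖ ^ 2 : ℝ) : ℂ)⁻¹ a := by
    have := ((hasDerivAt_id' (x := a)).sub_const a).fun_div
      ((hasDerivAt_const a (1 : ℂ)).fun_sub ((hasDerivAt_id' (x := a)).const_mul (conj a)))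
      (hden a (mem_ball_zero_iff.mpr ha))
    have hne : ((1 - ‖a‖ ^ 2 : ℝ) : ℂ) ≠ 0 := by exact_mod_cast ha'.ne'
    refine this.congr_deriv ?_
    rw [mul_one, hma, sub_self, zero_mul, sub_zero, one_mul]
    field_simp
  have hψ0 : HasDerivAt ψ (deriv ψ 0) 0 :=
    (hd.differentiableAt (ball_mem_nhds 0 one_pos)).hasDerivAt
  have hschwarz : ‖deriv (m ∘ ψ) 0‖ ≤ 1 := by
    refine Complex.norm_deriv_le_one_of_mapsTo_ball (hm_diff.comp hd hψ) ?_ one_pos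
    have : (m ∘ ψ) 0 = 0 := by simp [m, a]
    rw [this]
    exact (hm_maps.comp hψ).mono_right ball_subset_closedBall
  rw [(hm_deriv.comp 0 hψ0).deriv, norm_mul, norm_inv, Complex.norm_real,
    Real.norm_of_nonneg ha'.le, inv_mul_le_iff₀ ha', mul_one] at hschwarz
  exact hschwarz

theorem norm_deriv_le_one_sub_sq_of_mapsTo_closedBall {ψ : ℂ → ℂ}
    (hd : DifferentiableOn ℂ ψ (ball 0 1)) (hψ : MapsTo ψ (ball 0 1) (closedBall 0 1)) :
    ‖deriv ψ 0‖ ≤ 1 - ‖ψ 0‖ ^ 2 := by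
  -- `ψ` may touch the unit circle, so apply the open-disk case to `ρ * ψ` and let `ρ → 1⁻`.
  have hscaled : ∀ ρ ∈ Ioo (0 : ℝ) 1, ρ * ‖deriv ψ 0‖ ≤ 1 - ρ ^ 2 * ‖ψ 0‖ ^ 2 := by
    rintro ρ ⟨hρ0, hρ1⟩
    have hmaps : MapsTo (fun z => (ρ : ℂ) * ψ z) (ball 0 1) (ball 0 1) := by
      intro z hz
      rw [mem_ball_zero_iff, norm_mul, Complex.norm_real, Real.norm_of_nonneg hρ0.le]
      nlinarith [mem_closedBall_zero_iff.mp (hψ hz)]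
    have := norm_deriv_le_one_sub_sq_of_mapsTo_ball (hd.const_mul _) hmaps
    rwa [deriv_const_mul _ (hd.differentiableAt (ball_mem_nhds 0 one_pos)), norm_mul, norm_mul,
      Complex.norm_real, Real.norm_of_nonneg hρ0.le, mul_pow] at this
  have hlim : Tendsto (fun ρ : ℝ => ρ * ‖deriv ψ 0‖ - (1 - ρ ^ 2 * ‖ψ 0‖ ^ 2)) (𝓝[<] 1)
      (𝓝 (1 * ‖deriv ψ 0‖ - (1 - 1 ^ 2 * ‖ψ 0‖ ^ 2))) :=
    ((continuous_id.mul continuous_const).sub (continuous_const.sub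
      ((continuous_id.pow 2).mul continuous_const))).tendsto 1 |>.mono_left nhdsWithin_le_nhds
  have : _ ≤ (0 : ℝ) := le_of_tendsto hlim (by
    filter_upwards [Ioo_mem_nhdsLT one_pos] with ρ hρ
    linarith [hscaled ρ hρ])
  linarith

theorem norm_deriv_deriv_le_of_mapsTo_ball {ω : ℂ → ℂ} (hd : DifferentiableOn ℂ ω (ball 0 1))
    (h0 : ω 0 = 0) (hω : MapsTo ω (ball 0 1) (ball 0 1)) :
    ‖deriv (deriv ω) 0‖ ≤ 2 * (1 - ‖deriv ω 0‖ ^ 2) := by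
  set ψ := dslope ω 0
  have hψd : DifferentiableOn ℂ ψ (ball 0 1) :=
    (Complex.differentiableOn_dslope (ball_mem_nhds 0 one_pos)).mpr hd
  have hψ : MapsTo ψ (ball 0 1) (closedBall 0 1) := fun z hz => by
    simpa using Complex.norm_dslope_le_div_of_mapsTo_ball hd
      (by rw [h0]; exact hω.mono_right ball_subset_closedBall) hz
  have hω_eq : ω = fun z => z * ψ z := funext fun z => by
    simpa [h0] using (sub_smul_dslope ω 0 z).symm
  have hψa : AnalyticAt ℂ ψ 0 := hψd.analyticAt (ball_mem_nhds 0 one_pos)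
  rw [hω_eq, deriv_deriv_id_mul_zero hψa, deriv_id_mul_zero hψa.differentiableAt, norm_mul,
    Complex.norm_two]
  have := norm_deriv_le_one_sub_sq_of_mapsTo_closedBall hψd hψ
  linarith

theorem Subordinate.exists_derivs {g φ : ℂ → ℂ} (hφ : AnalyticAt ℂ φ 0) (h : Subordinate g φ) :
    ∃ k₁ k₂ : ℂ, ‖k₂‖ ≤ 2 * (1 - ‖k₁‖ ^ 2) ∧ deriv g 0 = deriv φ 0 * k₁ ∧
      deriv (deriv g) 0 = deriv (deriv φ) 0 * k₁ ^ 2 + deriv φ 0 * k₂ := by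
  obtain ⟨ω, hωd, hω0, hω, hgω⟩ := h
  have hωa : AnalyticAt ℂ ω 0 := hωd.analyticAt (ball_mem_nhds 0 one_pos)
  have hφω : AnalyticAt ℂ φ (ω 0) := by rwa [hω0]
  have hg : g =ᶠ[𝓝 0] φ ∘ ω := eventually_of_mem (ball_mem_nhds 0 one_pos) hgω
  refine ⟨deriv ω 0, deriv (deriv ω) 0, norm_deriv_deriv_le_of_mapsTo_ball hωd hω0 hω, ?_, ?_⟩
  · rw [hg.deriv_eq, deriv_comp 0 hφω.differentiableAt hωa.differentiableAt, hω0]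
  · rw [hg.deriv.deriv_eq, deriv_deriv_comp hφω hωa, hω0]

theorem three_mul_pow_three_le (b c : ℝ) (hb : 0 < b) :
    3 * b ^ 3 ≤ (|b ^ 2 - 2 * c| + 2 * b) * (b ^ 2 + b + |c - b|) := by
  have hu1 := le_abs_self (b ^ 2 - 2 * c)
  have hu2 := neg_le_abs (b ^ 2 - 2 * c)
  have hv1 := le_abs_self (c - b)
  have hv2 := neg_le_abs (c - b)
  set u := |b ^ 2 - 2 * c|
  set v := |c - b|
  have hu0 : 0 ≤ u := abs_nonneg _
  have hv0 : 0 ≤ v := abs_nonneg _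
  nlinarith [mul_nonneg hu0 hv0, mul_nonneg hu0 hb.le, sq_nonneg (b - 2), sq_nonneg (b - 1),
    mul_nonneg (mul_nonneg hb.le hb.le) hv0, mul_nonneg hb.le hv0, sq_nonneg b,
    mul_nonneg hu0 (mul_nonneg hb.le hb.le), mul_nonneg (mul_nonneg hb.le hb.le) hb.le]

theorem norm_le_and_sq_norm_mul_le {B₁ B₂ : ℝ} (hB₁ : 0 < B₁) {p k₁ k₂ l₁ l₂ : ℂ}
    (hk : ‖k₂‖ ≤ 2 * (1 - ‖k₁‖ ^ 2)) (hl : ‖l₂‖ ≤ 2 * (1 - ‖l₁‖ ^ 2))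
    (hp : p = B₁ * k₁) (hp' : -p = B₁ * l₁)
    (hsum : 2 * p ^ 2 = 2 * B₂ * (k₁ ^ 2 + l₁ ^ 2) + B₁ * (k₂ + l₂)) :
    ‖p‖ ≤ B₁ ∧ ‖p‖ ^ 2 * (|B₁ ^ 2 - 2 * B₂| + 2 * B₁) ≤ 2 * B₁ ^ 3 := by
  have hB₁ne : (B₁ : ℂ) ≠ 0 := by exact_mod_cast hB₁.ne'
  have hl₁ : l₁ = -k₁ := mul_left_cancel₀ hB₁ne (by linear_combination -hp' - hp)
  have hnorm_p : ‖p‖ = B₁ * ‖k₁‖ := by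
    rw [hp, norm_mul, Complex.norm_real, Real.norm_of_nonneg hB₁.le]
  have hk₁ : ‖k₁‖ ≤ 1 := by nlinarith [norm_nonneg k₂, norm_nonneg k₁]
  rw [hl₁, norm_neg] at hl
  have hident : ((2 * B₁ ^ 2 - 4 * B₂ : ℝ) : ℂ) * p ^ 2 = (B₁ : ℂ) ^ 3 * (k₂ + l₂) := by
    rw [hl₁] at hsum
    push_cast
    linear_combination (B₁ : ℂ) ^ 2 * hsum - 4 * B₂ * (p + B₁ * k₁) * hp
  have hnorms := congrArg norm hident
  rw [norm_mul, norm_mul, norm_pow, norm_pow, Complex.norm_real, Complex.norm_real,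
    Real.norm_eq_abs, Real.norm_of_nonneg hB₁.le,
    show 2 * B₁ ^ 2 - 4 * B₂ = 2 * (B₁ ^ 2 - 2 * B₂) by ring, abs_mul, abs_two] at hnorms
  have htri : ‖k₂ + l₂‖ ≤ 4 * (1 - ‖k₁‖ ^ 2) := by linarith [norm_add_le k₂ l₂]
  rw [hnorm_p] at hnorms ⊢
  refine ⟨by nlinarith, ?_⟩
  nlinarith [mul_le_mul_of_nonneg_left htri (pow_nonneg hB₁.le 3)]

theorem stmt8_general
    (f F : ℂ → ℂ)
    (hf : DifferentiableOn ℂ f (ball 0 1)) (hf0 : f 0 = 0) (hf1 : deriv f 0 = 1)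
    (hF : DifferentiableOn ℂ F (ball 0 1))
    (hFf : ∀ᶠ z in nhds (0 : ℂ), F (f z) = z)
    (φ : ℂ → ℂ) (B₁ B₂ : ℝ)
    (hφ : DifferentiableOn ℂ φ (ball 0 1))
    (hB₁ : 0 < B₁) (hφ1 : deriv φ 0 = (B₁ : ℂ)) (hφ2 : iteratedDeriv 2 φ 0 = 2 * (B₂ : ℂ))
    (hfsub : Subordinate (fun z => 1 + z * deriv (deriv f) z / deriv f z) φ)
    (hFsub : Subordinate (fun w => 1 + w * deriv (deriv F) w / deriv F w) φ) :
    ‖iteratedDeriv 2 f 0 / 2‖ ≤ min (Real.sqrt ((B₁ ^ 2 + B₁ + |B₂ - B₁|) / 6)) (B₁ / 2) := by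
  have hfa : AnalyticAt ℂ f 0 := hf.analyticAt (ball_mem_nhds 0 one_pos)
  have hFa : AnalyticAt ℂ F 0 := hF.analyticAt (ball_mem_nhds 0 one_pos)
  have hφa : AnalyticAt ℂ φ 0 := hφ.analyticAt (ball_mem_nhds 0 one_pos)
  obtain ⟨hF1, hF2, hF3⟩ := derivs_of_comp_eventuallyEq_id (by rwa [hf0]) hfa hf1 hFf
  rw [hf0] at hF1 hF2 hF3
  obtain ⟨hg1, hg2⟩ := derivs_one_add_mul_deriv_deriv_div_deriv hfa hf1
  obtain ⟨hG1, hG2⟩ := derivs_one_add_mul_deriv_deriv_div_deriv hFa hF1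
  obtain ⟨k₁, k₂, hk, e₁, e₂⟩ := hfsub.exists_derivs hφa
  obtain ⟨l₁, l₂, hl, e₃, e₄⟩ := hFsub.exists_derivs hφa
  rw [iteratedDeriv_succ, iteratedDeriv_one] at hφ2 ⊢
  rw [hg1, hφ1] at e₁
  rw [hg2, hφ1, hφ2] at e₂
  rw [hG1, hF2, hφ1] at e₃
  rw [hG2, hF2, hF3, hφ1, hφ2] at e₄
  obtain ⟨hp_le, hp_sq⟩ :=
    norm_le_and_sq_norm_mul_le hB₁ hk hl e₁ e₃ (by linear_combination e₂ + e₄)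
  have hkey := three_mul_pow_three_le B₁ B₂ hB₁
  rw [norm_div, Complex.norm_two]
  refine le_min (Real.le_sqrt_of_sq_le ?_) (by linarith)
  nlinarith [norm_nonneg (deriv (deriv f) 0), abs_nonneg (B₁ ^ 2 - 2 * B₂)]

theorem stmt8
    (f F : ℂ → ℂ)
    (hf : DifferentiableOn ℂ f (ball 0 1)) (hf0 : f 0 = 0) (hf1 : deriv f 0 = 1)
    (hfi : InjOn f (ball 0 1))
    (hF : DifferentiableOn ℂ F (ball 0 1)) (hF0 : F 0 = 0) (hFi : InjOn F (ball 0 1))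
    (hFf : ∀ᶠ z in nhds (0 : ℂ), F (f z) = z)
    (φ : ℂ → ℂ) (B₁ B₂ : ℝ)
    (hφ : DifferentiableOn ℂ φ (ball 0 1)) (hφ0 : φ 0 = 1)
    (hB₁ : 0 < B₁) (hφ1 : deriv φ 0 = (B₁ : ℂ)) (hφ2 : iteratedDeriv 2 φ 0 = 2 * (B₂ : ℂ))
    (hfsub : Subordinate (fun z => 1 + z * deriv (deriv f) z / deriv f z) φ)
    (hFsub : Subordinate (fun w => 1 + w * deriv (deriv F) w / deriv F w) φ) :
    ‖iteratedDeriv 2 f 0 / 2‖ ≤ min (Real.sqrt ((B₁ ^ 2 + B₁ + |B₂ - B₁|) / 6)) (B₁ / 2) :=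
  stmt8_general f F hf hf0 hf1 hF hFf φ B₁ B₂ hφ hB₁ hφ1 hφ2 hfsub hFsub
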